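/- Let G be a pancyclic graph with n > 6 vertices and Hamiltonian cycle H, and let A be an arc of H whose two endpoints are joined by a chord, with |A| ≥ (n+2)/3 edges. Then the contraction G_A of one edge of A is pancyclic on n−1 vertices. -/

import Mathlib

open SimpleGraph

/-- `G` has a cycle of length `k`. -/
def HasCycleLength {V : Type*} (G : SimpleGraph V) (k : ℕ) : Prop :=
  ∃ (v : V) (w : G.Walk v v), w.IsCycle ∧ w.length = k

/-- A graph on a finite vertex type is pancyclic if it has a cycle of every
length `k` with `3 ≤ k ≤ n`, where `n` is the number of vertices. -/
def Pancyclic {V : Type*} [Fintype V] (G : SimpleGraph V) : Prop :=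
  ∀ k : ℕ, 3 ≤ k → k ≤ Fintype.card V → HasCycleLength G k

/-- `m n` is the minimum number of edges of a pancyclic graph on `n` vertices. -/
noncomputable def m (n : ℕ) : ℕ :=
  sInf {e | ∃ G : SimpleGraph (Fin n), Pancyclic G ∧ G.edgeSet.ncard = e}

/-- Contract the edge `{u, v}` of `G`: delete `u` and attach its neighbors to `v`. -/
def contractEdge {V : Type*} (G : SimpleGraph V) (u v : V) :
    SimpleGraph {x : V // x ≠ u} where
  Adj a b := a ≠ b ∧
    (G.Adj a b ∨ ((a : V) = v ∧ G.Adj u b) ∨ ((b : V) = v ∧ G.Adj a u))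
  symm := by
    constructor
    rintro a b ⟨hab, h⟩
    refine ⟨hab.symm, ?_⟩
    rcases h with h | ⟨h1, h2⟩ | ⟨h1, h2⟩
    · exact Or.inl h.symm
    · exact Or.inr (Or.inr ⟨h1, h2.symm⟩)
    · exact Or.inr (Or.inl ⟨h1, h2.symm⟩)
  loopless := ⟨fun a h => h.1 rfl⟩

/-- `a, a+1, …, a+L` is an arc of the standard Hamiltonian cycle `0,1,…,n-1` of
`G` on `ZMod n`: a maximal path of the cycle all of whose interior vertices have
degree 2 (maximality: the two endpoints have degree greater than 2). -/
def IsArc {n : ℕ} (G : SimpleGraph (ZMod n)) (a : ZMod n) (L : ℕ) : Prop :=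
  L < n ∧
  (∀ t : ℕ, 0 < t → t < L → (G.neighborSet (a + (t : ZMod n))).ncard = 2) ∧
  2 < (G.neighborSet a).ncard ∧ 2 < (G.neighborSet (a + (L : ZMod n))).ncard

/-!
Since `a + 1, …, a + L - 1` have degree two, a cycle meeting one of them runs along the whole
arc. A cycle of length `k + 1` through `a + 1` contracts to one of length `k`, and a cycle of
length `k` avoiding `a + 1` survives the contraction. Otherwise the `k`-cycle contains the arc, so
`k > L`, while the `(k + 1)`-cycle avoids its `L - 1` interior vertices, so `k + L ≤ n`; then a
cycle of length `k + L - 1` exists, cannot avoid the interior (as `3L ≥ n + 2`), and replacing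
its arc by the chord gives a cycle of length `k` missing `a + 1`.
-/

namespace SimpleGraph

variable {V : Type*} {G : SimpleGraph V} {u v w x y z : V}

namespace Walk

lemma IsPath.hasCycleLength_succ {p : G.Walk u v} (hp : p.IsPath) (h : G.Adj v u)
    (hlen : 2 ≤ p.length) : HasCycleLength G (p.length + 1) := by
  refine ⟨v, .cons h p, isCycle_iff_isPath_tail_and_le_length.mpr ⟨?_, ?_⟩, rfl⟩
  · simpa using hp
  · simpa using hlen

lemma IsPath.exists_isPath_tail_of_neighborSet_eq_pair {p : G.Walk x w} (hp : p.IsPath)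
    (hxw : x ≠ w) (hxyz : G.neighborSet x = {y, z}) (hy : y ∉ p.support) :
    ∃ q : G.Walk z w, q.IsPath ∧ q.length + 1 = p.length ∧ x ∉ q.support ∧
      q.support ⊆ p.support := by
  cases p with
  | nil => exact absurd rfl hxw
  | cons h q =>
    rename_i u
    have hu : u ∈ G.neighborSet x := h
    rw [hxyz] at hu
    obtain rfl | rfl := hu
    · exact absurd (by simp) hy
    · rw [cons_isPath_iff] at hp
      exact ⟨q, hp.1, rfl, hp.2, fun _ hv => List.mem_cons_of_mem _ hv⟩

lemma IsCycle.exists_isPath_of_neighborSet_eq_pair_of_start {c : G.Walk x x} (hc : c.IsCycle)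
    (hxyz : G.neighborSet x = {y, z}) :
    ∃ p : G.Walk y z, p.IsPath ∧ p.length + 2 = c.length ∧ x ∉ p.support ∧
      p.support ⊆ c.support := by
  suffices ∃ (s t : V) (r : G.Walk s t), s ≠ t ∧ s ∈ G.neighborSet x ∧ t ∈ G.neighborSet x ∧
      r.IsPath ∧ r.length + 2 = c.length ∧ x ∉ r.support ∧ r.support ⊆ c.support by
    obtain ⟨s, t, r, hst, hs, ht, hr⟩ := this
    rw [hxyz] at hs ht
    obtain rfl | rfl := hs <;> obtain rfl | rfl := ht
    · exact absurd rfl hst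
    · exact ⟨r, hr⟩
    · exact ⟨r.reverse, by simpa using hr⟩
    · exact absurd rfl hst
  cases c with
  | nil => exact absurd nil_nil hc.not_nil
  | cons h q =>
    rename_i s
    have hqnil : ¬ q.Nil := not_nil_of_ne h.ne.symm
    have hr : (q.dropLast.concat (q.adj_penultimate hqnil)).IsPath := by
      rw [concat_dropLast]
      exact ((cons_isCycle_iff q h).mp hc).1
    rw [concat_isPath_iff] at hr
    refine ⟨s, q.penultimate, q.dropLast, ?_, h, (q.adj_penultimate hqnil).symm, hr.1, ?_,
      hr.2, ?_⟩
    · simpa [penultimate_cons_of_not_nil _ _ hqnil] using hc.snd_ne_penultimate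
    · have := length_dropLast_add_one hqnil
      simp only [length_cons]
      omega
    · intro v hv
      rw [support_dropLast hqnil] at hv
      exact List.mem_cons_of_mem _ (List.dropLast_subset _ hv)

lemma IsCycle.exists_isPath_of_neighborSet_eq_pair {c : G.Walk v v} (hc : c.IsCycle)
    (hx : x ∈ c.support) (hxyz : G.neighborSet x = {y, z}) :
    ∃ p : G.Walk y z, p.IsPath ∧ p.length + 2 = c.length ∧ x ∉ p.support ∧
      p.support ⊆ c.support := by
  classical
  obtain ⟨p, hp, hlen, hxp, hsub⟩ :=
    (hc.rotate hx).exists_isPath_of_neighborSet_eq_pair_of_start hxyz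
  exact ⟨p, hp, by rwa [length_rotate] at hlen, hxp,
    fun v hv => (mem_support_rotate_iff c x hx).mp (hsub hv)⟩

end Walk

def induceNeHomContractEdge (G : SimpleGraph V) (x y : V) :
    G.induce {w | w ≠ x} →g contractEdge G x y where
  toFun := id
  map_rel' h := ⟨fun e => h.ne e, Or.inl h⟩

namespace Walk

def toContractEdge (p : G.Walk u w) (hx : x ∉ p.support) (y : V) :
    (contractEdge G x y).Walk ⟨u, fun h => hx (h ▸ p.start_mem_support)⟩
      ⟨w, fun h => hx (h ▸ p.end_mem_support)⟩ :=
  (p.induce {w | w ≠ x} fun _ hw h => hx (h ▸ hw)).map (induceNeHomContractEdge G x y)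

@[simp]
lemma length_toContractEdge {p : G.Walk u w} (hx : x ∉ p.support) :
    (p.toContractEdge hx y).length = p.length := by
  refine (length_map _ _).trans ?_
  rw [← length_map (Embedding.induce _).toHom, map_induce]
  rfl

lemma IsPath.toContractEdge {p : G.Walk u w} (hp : p.IsPath) (hx : x ∉ p.support) :
    (p.toContractEdge hx y).IsPath :=
  .map (fun _ _ h => h) (.of_map (f := (Embedding.induce _).toHom) (by rwa [map_induce]))

lemma IsCycle.toContractEdge {c : G.Walk v v} (hc : c.IsCycle) (hx : x ∉ c.support) :
    (c.toContractEdge hx y).IsCycle :=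
  .map (fun _ _ h => h) (.of_map (f := (Embedding.induce _).toHom) (by rwa [map_induce]))

end Walk

lemma hasCycleLength_contractEdge_of_isCycle {c : G.Walk v v} (hc : c.IsCycle)
    (hx : x ∉ c.support) : HasCycleLength (contractEdge G x y) c.length :=
  ⟨_, _, hc.toContractEdge hx, Walk.length_toContractEdge hx⟩

lemma hasCycleLength_contractEdge_of_isPath {p : G.Walk u w} (hp : p.IsPath)
    (hx : x ∉ p.support) (hadj : G.Adj w u ∨ w = y ∧ G.Adj x u) (hlen : 2 ≤ p.length) :
    HasCycleLength (contractEdge G x y) (p.length + 1) := by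
  have huw : u ≠ w := by
    rintro rfl
    have := Walk.length_eq_zero_iff.mpr (Walk.isPath_iff_nil.mp hp)
    omega
  rw [← Walk.length_toContractEdge hx (y := y)]
  exact (hp.toContractEdge hx).hasCycleLength_succ
    ⟨fun h => huw (congrArg Subtype.val h).symm, hadj.imp id Or.inl⟩ (by simpa)

lemma Walk.IsCycle.hasCycleLength_contractEdge {c : G.Walk v v} (hc : c.IsCycle)
    (hx : x ∈ c.support) (hxyz : G.neighborSet x = {y, z}) (hlen : 4 ≤ c.length) :
    HasCycleLength (contractEdge G x y) (c.length - 1) := by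
  rw [Set.pair_comm] at hxyz
  obtain ⟨p, hp, hplen, hxp, -⟩ := hc.exists_isPath_of_neighborSet_eq_pair hx hxyz
  have hxz : G.Adj x z := by simp [← mem_neighborSet, hxyz]
  rw [show c.length - 1 = p.length + 1 by omega]
  exact hasCycleLength_contractEdge_of_isPath hp hxp (.inr ⟨rfl, hxz⟩) (by omega)

end SimpleGraph

section Arc

variable {n : ℕ} {G : SimpleGraph (ZMod n)} {a : ZMod n} {L : ℕ}

lemma add_natCast_inj {s t : ℕ} (hs : s < n) (ht : t < n) :
    a + (s : ZMod n) = a + t ↔ s = t := by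
  rw [add_right_inj]
  refine ⟨fun h => ?_, congrArg _⟩
  simpa [ZMod.val_cast_of_lt hs, ZMod.val_cast_of_lt ht] using congrArg ZMod.val h

lemma add_natCast_ne {t : ℕ} (ht0 : t ≠ 0) (htn : t < n) : a + (t : ZMod n) ≠ a := by
  simpa using (add_natCast_inj (a := a) htn (by omega : 0 < n)).not.mpr ht0

namespace IsArc

variable (hH : ∀ i : ZMod n, G.Adj i (i + 1)) (hA : IsArc G a L)
include hH hA

lemma neighborSet_eq {t : ℕ} (ht0 : 0 < t) (htL : t < L) :
    G.neighborSet (a + t) = {a + (t - 1 : ℕ), a + (t + 1 : ℕ)} := by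
  have hsub : {a + ((t - 1 : ℕ) : ZMod n), a + ((t + 1 : ℕ) : ZMod n)} ⊆
      G.neighborSet (a + t) := by
    rintro z (rfl | rfl)
    · have := hH (a + (t - 1 : ℕ))
      rw [add_assoc, ← Nat.cast_add_one, Nat.sub_add_cancel ht0] at this
      exact this.symm
    · simpa [add_assoc] using hH (a + t)
  have hne : a + ((t - 1 : ℕ) : ZMod n) ≠ a + (t + 1 : ℕ) := by
    rw [Ne, add_natCast_inj (by have := hA.1; omega) (by have := hA.1; omega)]
    omega
  have hdeg := hA.2.1 t ht0 htL
  refine (Set.eq_of_subset_of_ncard_le hsub ?_ (Set.finite_of_ncard_ne_zero (by omega))).symm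
  rw [Set.ncard_pair hne, hdeg]

lemma neighborSet_add_one (hL : 2 ≤ L) : G.neighborSet (a + 1) = {a, a + 2} := by
  simpa using hA.neighborSet_eq hH (t := 1) one_pos hL

lemma add_one_mem_support_of_add_mem_support {v : ZMod n} {c : G.Walk v v} (hc : c.IsCycle)
    {s : ℕ} (hs0 : 0 < s) (hsL : s < L) (hs : a + s ∈ c.support) : a + 1 ∈ c.support := by
  induction s with
  | zero => omega
  | succ s ih =>
    rcases Nat.eq_zero_or_pos s with rfl | hs0'
    · simpa using hs
    obtain ⟨p, -, -, -, hsub⟩ :=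
      hc.exists_isPath_of_neighborSet_eq_pair hs (hA.neighborSet_eq hH hs0 hsL)
    exact ih hs0' (by omega) (hsub p.start_mem_support)

lemma length_add_le_of_add_one_notMem_support [NeZero n] {v : ZMod n} {c : G.Walk v v}
    (hc : c.IsCycle) (h1 : a + 1 ∉ c.support) : c.length + L ≤ n + 1 := by
  classical
  have hLn := hA.1
  have hdisj :
      Disjoint c.support.tail.toFinset ((Finset.Ioo 0 L).image fun s : ℕ => a + s) := by
    simp only [Finset.disjoint_right, Finset.mem_image, Finset.mem_Ioo, List.mem_toFinset]
    rintro _ ⟨s, ⟨hs0, hsL⟩, rfl⟩ hs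
    exact h1 (hA.add_one_mem_support_of_add_mem_support hH hc hs0 hsL (List.mem_of_mem_tail hs))
  have hcard := (Finset.card_union_of_disjoint hdisj).symm.trans_le (Finset.card_le_univ _)
  rw [List.toFinset_card_of_nodup hc.support_nodup, List.length_tail, Walk.length_support,
    Finset.card_image_of_injOn, Nat.card_Ioo, ZMod.card] at hcard
  · omega
  · intro s hs t ht hst
    simp only [Finset.coe_Ioo, Set.mem_Ioo] at hs ht
    exact (add_natCast_inj (by omega) (by omega)).mp hst

lemma exists_isPath_of_add_one_mem_support (hL : 2 ≤ L) {v : ZMod n} {c : G.Walk v v}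
    (hc : c.IsCycle) (h1 : a + 1 ∈ c.support) :
    ∃ p : G.Walk (a + L) a, p.IsPath ∧ p.length + L = c.length ∧ a + 1 ∉ p.support := by
  have hLn := hA.1
  suffices ∀ t, 2 ≤ t → t ≤ L → ∃ p : G.Walk (a + t) a, p.IsPath ∧ p.length + t = c.length ∧
      ∀ s : ℕ, 0 < s → s < t → a + s ∉ p.support by
    obtain ⟨p, hp, hlen, hsupp⟩ := this L hL le_rfl
    exact ⟨p, hp, hlen, by simpa using hsupp 1 one_pos (by omega)⟩
  intro t ht2
  induction t, ht2 using Nat.le_induction with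
  | base =>
    intro _
    have hnb : G.neighborSet (a + 1) = {a + ((2 : ℕ) : ZMod n), a} := by
      rw [hA.neighborSet_add_one hH hL, Set.pair_comm, Nat.cast_ofNat]
    obtain ⟨p, hp, hlen, h1p, -⟩ := hc.exists_isPath_of_neighborSet_eq_pair h1 hnb
    refine ⟨p, hp, hlen, fun s hs0 hs2 => ?_⟩
    obtain rfl : s = 1 := by omega
    simpa using h1p
  | succ t ht2 ih =>
    intro htL
    obtain ⟨p, hp, hlen, hsupp⟩ := ih (by omega)
    obtain ⟨q, hq, hqlen, htq, hsub⟩ := hp.exists_isPath_tail_of_neighborSet_eq_pair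
      (add_natCast_ne (by omega) (by omega)) (hA.neighborSet_eq hH (by omega) (by omega))
      (hsupp (t - 1) (by omega) (by omega))
    refine ⟨q, hq, by omega, fun s hs0 hst hs => ?_⟩
    rcases Nat.lt_or_ge s t with hst' | hst'
    · exact hsupp s hs0 hst' (hsub hs)
    · exact htq (by rwa [show s = t by omega] at hs)

lemma lt_length_of_add_one_mem_support (hL : 2 ≤ L) {v : ZMod n} {c : G.Walk v v}
    (hc : c.IsCycle) (h1 : a + 1 ∈ c.support) : L < c.length := by
  obtain ⟨p, -, hlen, -⟩ := hA.exists_isPath_of_add_one_mem_support hH hL hc h1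
  have : p.length ≠ 0 := fun h0 =>
    add_natCast_ne (by omega) hA.1 (Walk.eq_of_length_eq_zero h0)
  omega

lemma hasCycleLength_contractEdge_of_chord (hL : 2 ≤ L) (hchord : G.Adj a (a + L))
    {v : ZMod n} {c : G.Walk v v} (hc : c.IsCycle) (h1 : a + 1 ∈ c.support)
    (hlen : L + 2 ≤ c.length) :
    HasCycleLength (contractEdge G (a + 1) a) (c.length + 1 - L) := by
  obtain ⟨p, hp, hplen, h1p⟩ := hA.exists_isPath_of_add_one_mem_support hH hL hc h1
  rw [show c.length + 1 - L = p.length + 1 by omega]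
  exact hasCycleLength_contractEdge_of_isPath hp h1p (.inl hchord) (by omega)

end IsArc

end Arc

theorem stmt_9_general {n : ℕ} [NeZero n] (G : SimpleGraph (ZMod n))
    (hH : ∀ i : ZMod n, G.Adj i (i + 1)) (hG : Pancyclic G)
    (a : ZMod n) (L : ℕ) (hA : IsArc G a L)
    (hchord : G.Adj a (a + (L : ZMod n)))
    (hlen : n + 2 ≤ 3 * L) :
    Pancyclic (contractEdge G (a + 1) a) ∧
    Fintype.card {x : ZMod n // x ≠ a + 1} = n - 1 := by
  have hLn := hA.1
  have hL : 2 ≤ L := by omega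
  have hcard : Fintype.card {x : ZMod n // x ≠ a + 1} = n - 1 := by
    rw [Fintype.card_subtype_compl, ZMod.card, Fintype.card_subtype_eq]
  refine ⟨fun k hk3 hkn => ?_, hcard⟩
  rw [hcard] at hkn
  have hcyc : ∀ j, 3 ≤ j → j ≤ n → HasCycleLength G j :=
    fun j hj3 hjn => hG j hj3 (by rwa [ZMod.card])
  obtain ⟨_, c₁, hc₁, hc₁len⟩ := hcyc (k + 1) (by omega) (by omega)
  by_cases h₁ : a + 1 ∈ c₁.support
  · simpa [hc₁len] using
      hc₁.hasCycleLength_contractEdge h₁ (hA.neighborSet_add_one hH hL) (by omega)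
  have hk₁ := hA.length_add_le_of_add_one_notMem_support hH hc₁ h₁
  obtain ⟨_, c₀, hc₀, hc₀len⟩ := hcyc k hk3 (by omega)
  by_cases h₀ : a + 1 ∉ c₀.support
  · exact hc₀len ▸ hasCycleLength_contractEdge_of_isCycle hc₀ h₀
  have hk₀ := hA.lt_length_of_add_one_mem_support hH hL hc₀ (not_not.mp h₀)
  obtain ⟨_, c₂, hc₂, hc₂len⟩ := hcyc (k + L - 1) (by omega) (by omega)
  by_cases h₂ : a + 1 ∈ c₂.support
  · have := hA.hasCycleLength_contractEdge_of_chord hH hL hchord hc₂ h₂ (by omega)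
    rwa [hc₂len, show k + L - 1 + 1 - L = k by omega] at this
  · have := hA.length_add_le_of_add_one_notMem_support hH hc₂ h₂
    omega

/-- If `G` is pancyclic on `n > 6` vertices with the standard Hamiltonian cycle on
`ZMod n`, and `A = (a, a+1, …, a+L)` is an arc whose two endpoints are joined by a
chord, with `L = |A| ≥ (n+2)/3` edges, then the graph `G_A` obtained by contracting
one edge of `A` is pancyclic on `n - 1` vertices. -/
theorem stmt_9 {n : ℕ} [NeZero n] (hn : 6 < n) (G : SimpleGraph (ZMod n))
    (hH : ∀ i : ZMod n, G.Adj i (i + 1)) (hG : Pancyclic G)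
    (a : ZMod n) (L : ℕ) (hA : IsArc G a L)
    (hchord : G.Adj a (a + (L : ZMod n)))
    (hlen : n + 2 ≤ 3 * L) :
    Pancyclic (contractEdge G (a + 1) a) ∧
    Fintype.card {x : ZMod n // x ≠ a + 1} = n - 1 :=
  stmt_9_general G hH hG a L hA hchord hlen
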